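/- arXiv:2303.00743 — 4 statements merged into one kernel-verified Lean document; each statement's English description precedes it below -/
import Mathlib

section
/- Let U, D_B(α) and the L²₀ boundary condition be as in the context. Fix α, B, k ∈ ℂ. If u : ℂ → ℂ² is smooth, not identically zero, satisfies the L²₀ boundary condition, and D_B(α)u + k·u = 0, then the function v(z) := (−u₂(−z), u₁(−z)) is smooth, not identically zero, satisfies the L²₀ boundary condition, and D_B(α)v − k·v = 0. (Hence the spectrum of D_B(α) on L²₀ is invariant under k ↦ −k.) -/
noncomputable section

open Complex ComplexConjugate

/-- ω = exp(2πi/3). -/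
def ω : ℂ := Complex.exp (2 * Real.pi * Complex.I / 3)

/-- The lattice Λ = ℤ + ωℤ. -/
def Lam : Set ℂ := {z : ℂ | ∃ m n : ℤ, z = (m : ℂ) + (n : ℂ) * ω}

/-- The dual lattice Λ* = (4πi/√3)Λ. -/
def LamS : Set ℂ :=
  {z : ℂ | ∃ m n : ℤ,
    z = 4 * (Real.pi : ℂ) * Complex.I / (Real.sqrt 3 : ℂ) * ((m : ℂ) + (n : ℂ) * ω)}

/-- ⟨z,w⟩ = Re (z ⬝ conj w). -/
def pairing (z w : ℂ) : ℝ := (z * conj w).re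

/-- K = 4π/3. -/
def Kpt : ℂ := 4 * (Real.pi : ℂ) / 3

/-- 2D_z̄ u = −i(∂ₓu + i∂9u), via the real Fréchet derivative. -/
def twoDbar (u : ℂ → ℂ) (z : ℂ) : ℂ :=
  -Complex.I * (fderiv ℝ u z 1 + Complex.I * fderiv ℝ u z Complex.I)

/-- The magnetic chiral Dirac operator D_B(α). -/
def DB (U : ℂ → ℂ) (α B : ℂ) (u : ℂ → ℂ × ℂ) (z : ℂ) : ℂ × ℂ :=
  (twoDbar (fun w => (u w).1) z + α * U z * (u z).2 + B * (u z).1,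
   α * U (-z) * (u z).1 + twoDbar (fun w => (u w).2) z - B * (u z).2)

/-- The chiral Dirac operator D(α) (no magnetic field). -/
def Dop (U : ℂ → ℂ) (α : ℂ) (u : ℂ → ℂ × ℂ) (z : ℂ) : ℂ × ℂ :=
  (twoDbar (fun w => (u w).1) z + α * U z * (u z).2,
   α * U (-z) * (u z).1 + twoDbar (fun w => (u w).2) z)

/-- The L²₀ boundary condition. -/
def BC (u : ℂ → ℂ × ℂ) : Prop :=
  ∀ γ ∈ Lam, ∀ z : ℂ,
    u (z + γ) = (Complex.exp (-Complex.I * (pairing γ Kpt : ℂ)) * (u z).1,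
                 Complex.exp (Complex.I * (pairing γ Kpt : ℂ)) * (u z).2)

/-- Hypotheses on the potential U. -/
def IsPotential (U : ℂ → ℂ) : Prop :=
  ContDiff ℝ (⊤ : ℕ∞) U ∧
  (∀ γ ∈ Lam, ∀ z : ℂ,
    U (z + γ) = Complex.exp (-2 * Complex.I * (pairing γ Kpt : ℂ)) * U z) ∧
  (∀ z : ℂ, U (ω * z) = ω * U z) ∧
  (∀ z : ℂ, conj (U (conj z)) = - U (-z))

/-
The map `𝓔 u (z) = (−u₂(−z), u₁(−z))` anticommutes with `D_B(α)`: the reflection `z ↦ −z`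
flips the sign of `D_z̄` and exchanges `U(z)` with `U(−z)`, while swapping the two components
(with one sign change) exchanges the roles of the diagonal terms `+B` and `−B`. It also preserves
the `L²₀` boundary condition because `Λ = −Λ` and the Bloch phases of the two components are
mutually inverse.
-/

lemma twoDbar_neg (g : ℂ → ℂ) (z : ℂ) :
    twoDbar (fun w => -g w) z = -twoDbar g z := by
  simp only [twoDbar, fderiv_fun_neg, neg_apply]
  ring

lemma twoDbar_comp_neg {g : ℂ → ℂ} {z : ℂ} (hg : DifferentiableAt ℝ g (-z)) :
    twoDbar (fun w => g (-w)) z = -twoDbar g (-z) := by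
  have hcomp : HasFDerivAt (fun w => g (-w))
      ((fderiv ℝ g (-z)).comp (-ContinuousLinearMap.id ℝ ℂ)) z :=
    hg.hasFDerivAt.comp z (hasFDerivAt_id z).neg
  simp only [twoDbar, hcomp.fderiv, ContinuousLinearMap.comp_apply,
    neg_apply, ContinuousLinearMap.id_apply, map_neg]
  ring

lemma neg_mem_Lam {γ : ℂ} (hγ : γ ∈ Lam) : -γ ∈ Lam := by
  obtain ⟨m, n, rfl⟩ := hγ
  exact ⟨-m, -n, by push_cast; ring⟩

lemma pairing_neg_left (z w : ℂ) : pairing (-z) w = -pairing z w := by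
  simp [pairing]

def chiralFlip (u : ℂ → ℂ × ℂ) (z : ℂ) : ℂ × ℂ := (-(u (-z)).2, (u (-z)).1)

lemma ContDiff.chiralFlip {n : WithTop ℕ∞} {u : ℂ → ℂ × ℂ} (hu : ContDiff ℝ n u) :
    ContDiff ℝ n (chiralFlip u) :=
  ((hu.comp contDiff_neg).snd.neg).prodMk (hu.comp contDiff_neg).fst

lemma chiralFlip_eq_zero_iff {u : ℂ → ℂ × ℂ} {z : ℂ} :
    chiralFlip u z = 0 ↔ u (-z) = 0 := by
  simp only [chiralFlip, Prod.ext_iff, Prod.fst_zero, Prod.snd_zero, neg_eq_zero]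
  exact and_comm

lemma BC.chiralFlip {u : ℂ → ℂ × ℂ} (hu : BC u) : BC (chiralFlip u) := by
  intro γ hγ z
  have h := hu (-γ) (neg_mem_Lam hγ) (-z)
  rw [pairing_neg_left] at h
  simp only [_root_.chiralFlip, neg_add, h, Prod.mk.injEq]
  push_cast
  constructor <;> ring_nf

lemma DB_chiralFlip (U : ℂ → ℂ) (α B : ℂ) {u : ℂ → ℂ × ℂ} (hu : Differentiable ℝ u) (z : ℂ) :
    DB U α B (chiralFlip u) z = -chiralFlip (DB U α B u) z := by
  have h₁ : twoDbar (fun w => -(u (-w)).2) z = twoDbar (fun w => (u w).2) (-z) := by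
    rw [twoDbar_neg, twoDbar_comp_neg (hu (-z)).snd, neg_neg]
  have h₂ : twoDbar (fun w => (u (-w)).1) z = -twoDbar (fun w => (u w).1) (-z) :=
    twoDbar_comp_neg (hu (-z)).fst
  simp only [DB, chiralFlip, h₁, h₂, neg_neg, Prod.neg_mk, Prod.mk.injEq]
  constructor <;> ring

theorem stmt0_general (U : ℂ → ℂ) (α B k : ℂ)
    (u : ℂ → ℂ × ℂ) (hu : ContDiff ℝ (⊤ : ℕ∞) u) (hune : ∃ z, u z ≠ 0)
    (hubc : BC u) (hueq : ∀ z : ℂ, DB U α B u z + k • u z = 0)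
    (v : ℂ → ℂ × ℂ) (hv : ∀ z : ℂ, v z = (-(u (-z)).2, (u (-z)).1)) :
    ContDiff ℝ (⊤ : ℕ∞) v ∧ (∃ z, v z ≠ 0) ∧ BC v ∧
      ∀ z : ℂ, DB U α B v z - k • v z = 0 := by
  obtain rfl : v = chiralFlip u := funext hv
  refine ⟨hu.chiralFlip, ?_, hubc.chiralFlip, fun z => ?_⟩
  · obtain ⟨z, hz⟩ := hune
    exact ⟨-z, by rwa [Ne, chiralFlip_eq_zero_iff, neg_neg]⟩
  · have hflip : chiralFlip (fun w => DB U α B u w + k • u w) z = 0 :=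
      chiralFlip_eq_zero_iff.mpr (hueq (-z))
    rw [DB_chiralFlip U α B (hu.differentiable (by simp)) z, ← neg_eq_zero, ← hflip]
    ext <;> simp only [chiralFlip, Prod.fst_neg, Prod.snd_neg, Prod.fst_sub, Prod.snd_sub,
      Prod.fst_add, Prod.snd_add, Prod.smul_fst, Prod.smul_snd, smul_eq_mul] <;> ring

/-- the symmetry 𝓔 v(z) = (−u₂(−z), u₁(−z)) sends eigenfunctions of
`D_B(α)` with eigenvalue `−k` to eigenfunctions with eigenvalue `k`. -/
theorem stmt0 (U : ℂ → ℂ) (hUpot : IsPotential U) (α B k : ℂ)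
    (u : ℂ → ℂ × ℂ) (hu : ContDiff ℝ (⊤ : ℕ∞) u) (hune : ∃ z, u z ≠ 0)
    (hubc : BC u) (hueq : ∀ z : ℂ, DB U α B u z + k • u z = 0)
    (v : ℂ → ℂ × ℂ) (hv : ∀ z : ℂ, v z = (-(u (-z)).2, (u (-z)).1)) :
    ContDiff ℝ (⊤ : ℕ∞) v ∧ (∃ z, v z ≠ 0) ∧ BC v ∧
      ∀ z : ℂ, DB U α B v z - k • v z = 0 :=
  stmt0_general U α B k u hu hune hubc hueq v hv
end
end

section
/- Let U, D_B(α) and the L²₀ boundary condition be as in the context. Fix α, B, k ∈ ℂ. If u : ℂ → ℂ² is smooth, not identically zero, satisfies the L²₀ boundary condition, and D_B(α)u = k·u, then w(z) := u(ωz) is smooth, not identically zero, satisfies the L²₀ boundary condition, and D_{ω̄B}(α)w = ω̄k·w, where ω̄ = conj(ω). (Hence the spectrum of D_{ωB}(α) on L²₀ equals ω times the spectrum of D_B(α).) -/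
noncomputable section

open Complex ComplexConjugate

/-!
Rotation by `ω` maps `Λ` to itself and changes the phase `⟨γ, K⟩` only by a multiple of `2π`,
so it preserves the boundary condition. By the chain rule `D_z̄ (f(c·)) = c̄ (D_z̄ f)(c·)`, and
`U(z) = ω̄ U(ωz)`, so `D_{ω̄B}(α) (u(ω·)) = ω̄ (D_B(α) u)(ω·)` and eigenvalues rotate by `ω̄`.
-/

lemma omega_eq_exp_ofReal_mul_I : ω = exp (((2 * Real.pi / 3 : ℝ) : ℂ) * I) := by
  rw [ω]; push_cast; ring_nf

lemma omega_re : ω.re = -(1 / 2) := by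
  rw [omega_eq_exp_ofReal_mul_I, exp_ofReal_mul_I_re,
    show 2 * Real.pi / 3 = Real.pi - Real.pi / 3 by ring, Real.cos_pi_sub, Real.cos_pi_div_three]

lemma omega_im : ω.im = Real.sqrt 3 / 2 := by
  rw [omega_eq_exp_ofReal_mul_I, exp_ofReal_mul_I_im,
    show 2 * Real.pi / 3 = Real.pi - Real.pi / 3 by ring, Real.sin_pi_sub, Real.sin_pi_div_three]

lemma conj_omega_mul_omega : conj ω * ω = 1 := by
  rw [mul_comm, mul_conj, normSq_eq_norm_sq, omega_eq_exp_ofReal_mul_I, norm_exp_ofReal_mul_I]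
  norm_num

lemma omega_mul_omega : ω * ω = -1 - ω := by
  have h3 : Real.sqrt 3 * Real.sqrt 3 = 3 := Real.mul_self_sqrt (by norm_num)
  apply Complex.ext <;> simp [mul_re, mul_im, omega_re, omega_im] <;> nlinarith [h3]

lemma omega_mul_mem_Lam {γ : ℂ} (hγ : γ ∈ Lam) : ω * γ ∈ Lam := by
  obtain ⟨m, n, rfl⟩ := hγ
  exact ⟨-n, m - n, by push_cast; linear_combination (n : ℂ) * omega_mul_omega⟩

lemma pairing_Kpt (z : ℂ) : pairing z Kpt = z.re * (4 * Real.pi / 3) := by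
  have hK : Kpt = ((4 * Real.pi / 3 : ℝ) : ℂ) := by rw [Kpt]; push_cast; ring
  rw [pairing, hK, conj_ofReal, re_mul_ofReal]

-- Rotating `m + nω` by `ω` changes its real part by `-3m/2`, hence the phase by `-2πm`.
lemma exists_pairing_omega_mul_Kpt {γ : ℂ} (hγ : γ ∈ Lam) :
    ∃ m : ℤ, pairing (ω * γ) Kpt = pairing γ Kpt - 2 * Real.pi * m := by
  obtain ⟨m, n, rfl⟩ := hγ
  have h3 : Real.sqrt 3 * Real.sqrt 3 = 3 := Real.mul_self_sqrt (by norm_num)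
  refine ⟨m, ?_⟩
  simp only [pairing_Kpt, mul_re, add_re, add_im, mul_im, intCast_re, intCast_im, omega_re,
    omega_im]
  linear_combination (-(n : ℝ) * Real.pi / 3) * h3

lemma BC.comp_omega_mul {u : ℂ → ℂ × ℂ} (hu : BC u) : BC (fun z => u (ω * z)) := by
  intro γ hγ z
  obtain ⟨m, hm⟩ := exists_pairing_omega_mul_Kpt hγ
  have hphase : ∀ s : ℂ, s = I ∨ s = -I →
      exp (s * (pairing (ω * γ) Kpt : ℂ)) = exp (s * (pairing γ Kpt : ℂ)) := by
    rintro s hs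
    rw [exp_eq_exp_iff_exists_int]
    rcases hs with rfl | rfl
    · exact ⟨-m, by push_cast [hm]; ring⟩
    · exact ⟨m, by push_cast [hm]; ring⟩
  simp only [mul_add, hu _ (omega_mul_mem_Lam hγ), hphase I (.inl rfl), hphase (-I) (.inr rfl)]

lemma twoDbar_comp_const_mul {f : ℂ → ℂ} (c z : ℂ) (hf : DifferentiableAt ℝ f (c * z)) :
    twoDbar (fun s => f (c * s)) z = conj c * twoDbar f (c * z) := by
  have hcomp : HasFDerivAt (fun s => f (c * s))
      ((fderiv ℝ f (c * z)).comp (ContinuousLinearMap.mul ℝ ℂ c)) z :=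
    hf.hasFDerivAt.comp z (ContinuousLinearMap.mul ℝ ℂ c).hasFDerivAt
  rw [twoDbar, twoDbar, hcomp.fderiv]
  set D := fderiv ℝ f (c * z)
  have hc1 : D (c * 1) = c.re • D 1 + c.im • D I := by
    rw [← map_smul, ← map_smul, ← map_add]
    congr 1
    apply Complex.ext <;> simp
  have hcI : D (c * I) = (-c.im) • D 1 + c.re • D I := by
    rw [← map_smul, ← map_smul, ← map_add]
    congr 1
    apply Complex.ext <;> simp
  simp only [ContinuousLinearMap.comp_apply, ContinuousLinearMap.mul_apply', hc1, hcI,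
    real_smul, neg_smul]
  rw [show conj c = (c.re : ℂ) - (c.im : ℂ) * I by apply Complex.ext <;> simp]
  linear_combination (-(c.im : ℂ) * I * D I) * I_sq

lemma DB_comp_const_mul {U : ℂ → ℂ} {c : ℂ} (hc : conj c * c = 1)
    (hU : ∀ z, U (c * z) = c * U z) (α B : ℂ) {u : ℂ → ℂ × ℂ} (z : ℂ)
    (hu : DifferentiableAt ℝ u (c * z)) :
    DB U α (conj c * B) (fun s => u (c * s)) z = conj c • DB U α B u (c * z) := by
  have hUc : ∀ z, U z = conj c * U (c * z) := fun z => by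
    rw [hU, ← mul_assoc, hc, one_mul]
  have hu₁ := twoDbar_comp_const_mul (f := fun s => (u s).1) c z hu.fst
  have hu₂ := twoDbar_comp_const_mul (f := fun s => (u s).2) c z hu.snd
  simp only [DB, Prod.smul_mk, smul_eq_mul, hu₁, hu₂]
  rw [hUc z, hUc (-z), mul_neg]
  ext <;> ring

/-- the rotation symmetry w(z) = u(ωz) conjugates `D_B(α)` with eigenvalue `k`
to `D_{ω̄B}(α)` with eigenvalue `ω̄k`. -/
theorem stmt1 (U : ℂ → ℂ) (hUpot : IsPotential U) (α B k : ℂ)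
    (u : ℂ → ℂ × ℂ) (hu : ContDiff ℝ (⊤ : ℕ∞) u) (hune : ∃ z, u z ≠ 0)
    (hubc : BC u) (hueq : ∀ z : ℂ, DB U α B u z = k • u z)
    (w : ℂ → ℂ × ℂ) (hw : ∀ z : ℂ, w z = u (ω * z)) :
    ContDiff ℝ (⊤ : ℕ∞) w ∧ (∃ z, w z ≠ 0) ∧ BC w ∧
      ∀ z : ℂ, DB U α (conj ω * B) w z = (conj ω * k) • w z := by
  obtain rfl : w = fun z => u (ω * z) := funext hw
  refine ⟨hu.comp (contDiff_const.mul contDiff_id), ?_, hubc.comp_omega_mul, fun z => ?_⟩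
  · obtain ⟨z, hz⟩ := hune
    exact ⟨conj ω * z, by dsimp only; rwa [← mul_assoc, mul_comm ω, conj_omega_mul_omega, one_mul]⟩
  · rw [DB_comp_const_mul conj_omega_mul_omega hUpot.2.2.1 α B z
      (hu.differentiable (by simp) _), hueq, smul_smul]
end
end

section
/- Let U, D_B(α) and the L²₀ boundary condition be as in the context. Fix α, B, k ∈ ℂ. If u : ℂ → ℂ² is smooth, not identically zero, satisfies the L²₀ boundary condition, and D_B(α)u = k·u, then v(z) := conj(u(−conj z)) (componentwise complex conjugation) is smooth, not identically zero, satisfies the L²₀ boundary condition, and D_{conj B}(−conj α)v = conj(k)·v. (Together with the symmetries α ↦ −α and k ↦ −k, this gives that the spectrum of D_{conj B}(conj α) on L²₀ is the complex conjugate of the spectrum of D_B(α).) -/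
/-!
Complex conjugation composed with the orientation-reversing reflection `z ↦ −conj z` commutes
with `2D_z̄`; the symmetry `conj (U (conj z)) = −U(−z)` turns the coupling `α` into `−conj α`,
and the constant terms `±B` become `±conj B`. The reflection `γ ↦ −conj γ` preserves `Λ` and
negates the pairing with the real point `K`, which compensates the conjugation of the Floquet
phases, so the `L²₀` condition is preserved.
-/

noncomputable section

open Complex ComplexConjugate

lemma conj_ω : conj ω = -1 - ω := by
  have hω : ω = ↑(Real.cos (2 * Real.pi / 3)) + ↑(Real.sin (2 * Real.pi / 3)) * I := by
    rw [ω, show 2 * ↑Real.pi * I / 3 = ↑(2 * Real.pi / 3) * I by push_cast; ring, exp_mul_I,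
      ← ofReal_cos, ← ofReal_sin]
  have hcos : Real.cos (2 * Real.pi / 3) = -(1 / 2) := by
    rw [show 2 * Real.pi / 3 = Real.pi - Real.pi / 3 by ring, Real.cos_pi_sub,
      Real.cos_pi_div_three]
  rw [hω, hcos]
  simp only [map_add, map_mul, conj_ofReal, conj_I]
  push_cast
  ring

lemma neg_conj_mem_Lam {γ : ℂ} (hγ : γ ∈ Lam) : -conj γ ∈ Lam := by
  obtain ⟨m, n, rfl⟩ := hγ
  refine ⟨n - m, n, ?_⟩
  simp only [map_add, map_mul, conj_ω, map_intCast]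
  push_cast
  ring

lemma pairing_neg_conj_ofReal (γ : ℂ) (r : ℝ) : pairing (-conj γ) r = -pairing γ r := by
  simp [pairing, mul_re]

lemma pairing_neg_conj_Kpt (γ : ℂ) : pairing (-conj γ) Kpt = -pairing γ Kpt := by
  have hK : Kpt = ((4 * Real.pi / 3 : ℝ) : ℂ) := by
    rw [Kpt]
    push_cast
    ring
  rw [hK, pairing_neg_conj_ofReal]

lemma twoDbar_conj_comp_neg_conj {f : ℂ → ℂ} {z : ℂ} (hf : DifferentiableAt ℝ f (-conj z)) :
    twoDbar (fun w => conj (f (-conj w))) z = conj (twoDbar f (-conj z)) := by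
  let C : ℂ →L[ℝ] ℂ := conjCLE
  have hR : HasFDerivAt (fun w : ℂ => -conj w) (-C) z := C.hasFDerivAt.neg
  have h : HasFDerivAt (fun w => conj (f (-conj w))) (C ∘L fderiv ℝ f (-conj z) ∘L (-C)) z :=
    C.hasFDerivAt.comp z (hf.hasFDerivAt.comp z hR)
  rw [twoDbar, twoDbar, h.fderiv]
  simp only [C, ContinuousLinearMap.comp_apply, neg_apply,
    ContinuousLinearEquiv.coe_coe, conjCLE_apply, map_one, conj_I, neg_neg, map_neg,
    map_mul, map_add]
  ring

def conjReflect (u : ℂ → ℂ × ℂ) (z : ℂ) : ℂ × ℂ :=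
  Prod.map conj conj (u (-conj z))

lemma ContDiff.conjReflect {n : WithTop ℕ∞} {u : ℂ → ℂ × ℂ} (hu : ContDiff ℝ n u) :
    ContDiff ℝ n (conjReflect u) := by
  have hconj : ContDiff ℝ n (fun w : ℂ => conj w) := conjCLE.contDiff
  exact (hconj.prodMap hconj).comp (hu.comp hconj.neg)

lemma conjReflect_ne_zero {u : ℂ → ℂ × ℂ} {z : ℂ} (hz : u z ≠ 0) :
    conjReflect u (-conj z) ≠ 0 := by
  simpa [conjReflect, Prod.ext_iff] using hz

lemma BC.conjReflect {u : ℂ → ℂ × ℂ} (hu : BC u) : BC (conjReflect u) := by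
  intro γ hγ z
  have hz : -conj (z + γ) = -conj z + -conj γ := by rw [map_add, neg_add]
  simp only [_root_.conjReflect, hz, hu _ (neg_conj_mem_Lam hγ), pairing_neg_conj_Kpt,
    Prod.map_apply, Prod.map_fst, Prod.map_snd, map_mul, ← exp_conj, map_neg, conj_I,
    conj_ofReal, ofReal_neg]
  ring_nf

lemma DB_conjReflect {U : ℂ → ℂ} (hU : ∀ z, conj (U (conj z)) = -U (-z)) (α B : ℂ)
    {u : ℂ → ℂ × ℂ} (hu : Differentiable ℝ u) (z : ℂ) :
    DB U (-conj α) (conj B) (conjReflect u) z = Prod.map conj conj (DB U α B u (-conj z)) := by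
  have hU₁ : U z = -conj (U (-conj z)) := by
    have h := hU (-z)
    rw [map_neg, neg_neg] at h
    rw [h, neg_neg]
  have hU₂ : U (-z) = -conj (U (conj z)) := by rw [hU, neg_neg]
  have hD₁ := twoDbar_conj_comp_neg_conj (f := fun w => (u w).1) (z := z) (hu _).fst
  have hD₂ := twoDbar_conj_comp_neg_conj (f := fun w => (u w).2) (z := z) (hu _).snd
  simp only [DB, conjReflect, Prod.map_apply, hD₁, hD₂, hU₁, hU₂, map_add, map_sub, map_mul,
    neg_neg, Prod.map_fst, Prod.map_snd]
  ext <;> ring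

/-- the antilinear symmetry v(z) = conj (u (−conj z)) conjugates `D_B(α)` with
eigenvalue `k` to `D_{conj B}(−conj α)` with eigenvalue `conj k`. -/
theorem stmt2 (U : ℂ → ℂ) (hUpot : IsPotential U) (α B k : ℂ)
    (u : ℂ → ℂ × ℂ) (hu : ContDiff ℝ (⊤ : ℕ∞) u) (hune : ∃ z, u z ≠ 0)
    (hubc : BC u) (hueq : ∀ z : ℂ, DB U α B u z = k • u z)
    (v : ℂ → ℂ × ℂ)
    (hv : ∀ z : ℂ, v z = (conj ((u (-(conj z))).1), conj ((u (-(conj z))).2))) :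
    ContDiff ℝ (⊤ : ℕ∞) v ∧ (∃ z, v z ≠ 0) ∧ BC v ∧
      ∀ z : ℂ, DB U (-(conj α)) (conj B) v z = (conj k) • v z := by
  obtain rfl : v = conjReflect u := funext hv
  obtain ⟨z₀, hz₀⟩ := hune
  refine ⟨hu.conjReflect, ⟨_, conjReflect_ne_zero hz₀⟩, hubc.conjReflect, fun z => ?_⟩
  rw [DB_conjReflect hUpot.2.2.2 α B (hu.differentiable (by simp)), hueq]
  ext <;> simp [conjReflect]
end
end

section
/- Define θ(z) := −∑_{n∈ℤ} exp(πi(n + 1/2)²ω + 2πi(n + 1/2)(z + 1/2)) where ω = exp(2πi/3). Then θ(z) = 0 if and only if z ∈ Λ := ℤ + ωℤ; moreover all zeros are simple, i.e., θ'(z) ≠ 0 for every z ∈ Λ. -/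
noncomputable section

open Complex ComplexConjugate

/-- The Jacobi theta function θ(z) = θ₁(z|ω) = −θ_{1/2,1/2}(z|ω). -/
def θf (z : ℂ) : ℂ :=
  -∑' n : ℤ, Complex.exp ((Real.pi : ℂ) * Complex.I * ((n : ℂ) + 1/2)^2 * ω
      + 2 * (Real.pi : ℂ) * Complex.I * ((n : ℂ) + 1/2) * (z + 1/2))

/-!
Up to a nowhere vanishing exponential factor, `θf z` is Mathlib's `jacobiTheta₂` at
`z + (1 + ω) / 2`, so `θf` is entire and `θf (z + ω) = -exp (-πiω - 2πiz) * θf z`. Hence both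
the zero set and the set of multiple zeros are invariant under `z ↦ z + ω`, and it suffices to
study the strip `|Im z| ≤ √3 / 4`, which meets every coset of `ℤω`.

Pairing the terms `n` and `-n-1` of the series gives the classical expansion
`θ(z) = 2 ∑_{n ≥ 0} (-1)^n q^((n+1/2)^2) sin((2n+1)πz)` with `q = exp(πiω)`, hence
`θ(z) = 2 sin(πz) G(z)`. On the strip, `|q| = exp(-π√3/2) < 1/7` is so small that the `n = 0`
term of `G` dominates the others: `|G| ≥ exp(-π√3/8)/4`. So in the strip the zeros of `θ` are
those of `sin(πz)`, namely the integers, and the bound `|θ(z)| ≥ c |sin(πz)|` forces `θ'(m) ≠ 0`.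
-/

open Filter Topology
open scoped Real

lemma periodic_apply_eq_zero {α M₀ : Type*} [Add α] [MulZeroClass M₀] [NoZeroDivisors M₀]
    {f e : α → M₀} {c : α} (he : ∀ z, e z ≠ 0) (hfe : ∀ z, f (z + c) = e z * f z) :
    Function.Periodic (fun z => f z = 0) c := fun z => by
  simp [hfe, he]

lemma periodic_apply_eq_zero_and_deriv_eq_zero {𝕜 : Type*} [NontriviallyNormedField 𝕜]
    {f e : 𝕜 → 𝕜} {c : 𝕜} (he : ∀ z, e z ≠ 0) (hf : Differentiable 𝕜 f)
    (he' : Differentiable 𝕜 e) (hfe : ∀ z, f (z + c) = e z * f z) :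
    Function.Periodic (fun z => f z = 0 ∧ deriv f z = 0) c := fun z => by
  have hderiv : deriv f (z + c) = deriv e z * f z + e z * deriv f z := by
    rw [← deriv_comp_add_const, funext hfe]
    exact deriv_mul (he' z) (hf z)
  simp only [periodic_apply_eq_zero he hfe z, hderiv]
  exact propext (and_congr_right fun hz => by simp [hz, he])

lemma mul_norm_le_norm_of_hasDerivAt {𝕜 E F : Type*} [NontriviallyNormedField 𝕜]
    [NormedAddCommGroup E] [NormedSpace 𝕜 E] [NormedAddCommGroup F] [NormedSpace 𝕜 F]
    {f : 𝕜 → E} {g : 𝕜 → F} {a : E} {b : F} {x : 𝕜} {C : ℝ}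
    (hf : HasDerivAt f a x) (hg : HasDerivAt g b x) (hfx : f x = 0) (hgx : g x = 0)
    (hle : ∀ᶠ y in 𝓝 x, C * ‖g y‖ ≤ ‖f y‖) : C * ‖b‖ ≤ ‖a‖ := by
  refine le_of_tendsto_of_tendsto ((hasDerivAt_iff_tendsto_slope.1 hg).norm.const_mul C)
    (hasDerivAt_iff_tendsto_slope.1 hf).norm ?_
  filter_upwards [nhdsWithin_le_nhds hle] with y hy
  simp only [slope_def_module, hfx, hgx, sub_zero, norm_smul, norm_inv]
  rw [mul_left_comm]
  exact mul_le_mul_of_nonneg_left hy (by positivity)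

lemma ω_im : ω.im = √3 / 2 := by
  rw [ω, exp_im, show 2 * (π : ℂ) * I / 3 = ((2 * π / 3 : ℝ) : ℂ) * I by push_cast; ring,
    re_ofReal_mul, im_ofReal_mul, I_re, I_im, mul_zero, Real.exp_zero, one_mul, mul_one,
    show 2 * π / 3 = π - π / 3 by ring, Real.sin_pi_sub, Real.sin_pi_div_three]

lemma ω_im_pos : 0 < ω.im := by
  rw [ω_im]; positivity

def θTerm (z : ℂ) (n : ℤ) : ℂ :=
  exp (π * I * (n + 1 / 2) ^ 2 * ω + 2 * π * I * (n + 1 / 2) * (z + 1 / 2))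

lemma θf_eq_neg_tsum_θTerm (z : ℂ) : θf z = -∑' n, θTerm z n := rfl

lemma θTerm_eq_mul_jacobiTheta₂_term (z : ℂ) (n : ℤ) :
    θTerm z n = exp (π * I * ω / 4 + π * I * (z + 1 / 2)) *
      jacobiTheta₂_term n (z + (1 + ω) / 2) ω := by
  rw [θTerm, jacobiTheta₂_term, ← exp_add]
  ring_nf

lemma summable_θTerm (z : ℂ) : Summable (θTerm z) := by
  refine ((((summable_jacobiTheta₂_term_iff (z + (1 + ω) / 2) ω).2 ω_im_pos).mul_left
    (exp (π * I * ω / 4 + π * I * (z + 1 / 2))))).congr fun n => ?_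
  rw [θTerm_eq_mul_jacobiTheta₂_term]

lemma θf_eq_mul_jacobiTheta₂ (z : ℂ) :
    θf z = -(exp (π * I * ω / 4 + π * I * (z + 1 / 2)) *
      jacobiTheta₂ (z + (1 + ω) / 2) ω) := by
  simp only [θf_eq_neg_tsum_θTerm, θTerm_eq_mul_jacobiTheta₂_term, tsum_mul_left,
    jacobiTheta₂]

lemma differentiable_θf : Differentiable ℂ θf := by
  rw [funext θf_eq_mul_jacobiTheta₂]
  refine fun z => ((by fun_prop : DifferentiableAt ℂ _ z).mul ?_).neg
  exact (differentiableAt_jacobiTheta₂_fst _ ω_im_pos).comp z (by fun_prop)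

lemma θf_add_ω (z : ℂ) :
    θf (z + ω) = -exp (-π * I * ω - 2 * π * I * z) * θf z := by
  rw [θf_eq_mul_jacobiTheta₂, θf_eq_mul_jacobiTheta₂,
    show z + ω + (1 + ω) / 2 = z + (1 + ω) / 2 + ω by ring, jacobiTheta₂_add_left']
  have hexp : exp (π * I * ω / 4 + π * I * (z + ω + 1 / 2)) *
      exp (-π * I * (ω + 2 * (z + (1 + ω) / 2))) =
      -exp (-π * I * ω - 2 * π * I * z) *
        exp (π * I * ω / 4 + π * I * (z + 1 / 2)) := by
    have hneg : ∀ ζ, -exp ζ = exp (ζ - π * I) := fun ζ => by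
      rw [exp_sub, exp_pi_mul_I, div_neg, div_one]
    rw [hneg, ← exp_add, ← exp_add]
    ring_nf
  linear_combination (-jacobiTheta₂ (z + (1 + ω) / 2) ω) * hexp

def sinQuot (n : ℕ) (x : ℂ) : ℂ :=
  ∑ j ∈ Finset.range (2 * n + 1), exp ((2 * n - 2 * j) * x * I)

lemma sin_mul_sinQuot (n : ℕ) (x : ℂ) : sin x * sinQuot n x = sin ((2 * n + 1) * x) := by
  set g : ℕ → ℂ := fun j => exp ((2 * n + 1 - 2 * j) * x * I) with hg
  have hterm (j : ℕ) : sin x * exp ((2 * n - 2 * j) * x * I) = (g (j + 1) - g j) * I / 2 := by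
    have h₁ : exp (x * I) * exp ((2 * n - 2 * j) * x * I) = g j := by
      simp only [hg]; rw [← exp_add]; ring_nf
    have h₂ : exp (-x * I) * exp ((2 * n - 2 * j) * x * I) = g (j + 1) := by
      simp only [hg]; rw [← exp_add]; push_cast; ring_nf
    rw [Complex.sin]
    linear_combination (I / 2) * h₂ - (I / 2) * h₁
  rw [sinQuot, Finset.mul_sum, Finset.sum_congr rfl fun j _ => hterm j, ← Finset.sum_div,
    ← Finset.sum_mul, Finset.sum_range_sub, Complex.sin, hg]
  push_cast
  ring_nf

lemma norm_sinQuot_le (n : ℕ) (x : ℂ) :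
    ‖sinQuot n x‖ ≤ (2 * n + 1) * Real.exp (2 * n * |x.im|) := by
  refine (norm_sum_le _ _).trans ?_
  have hterm : ∀ j ∈ Finset.range (2 * n + 1),
      ‖exp ((2 * n - 2 * j) * x * I)‖ ≤ Real.exp (2 * n * |x.im|) := by
    intro j hj
    have hj : (j : ℝ) ≤ 2 * n := by exact_mod_cast Nat.lt_succ_iff.1 (Finset.mem_range.1 hj)
    rw [norm_exp, Real.exp_le_exp,
      show (2 * n - 2 * j : ℂ) = ((2 * n - 2 * j : ℝ) : ℂ) by push_cast; ring, mul_assoc,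
      re_ofReal_mul, mul_I_re]
    calc ((2 : ℝ) * n - 2 * j) * -x.im ≤ |(2 : ℝ) * n - 2 * j| * |x.im| := by
          rw [← abs_mul]; exact (neg_le_abs _).trans_eq' (by ring)
      _ ≤ 2 * n * |x.im| := by
          gcongr; rw [abs_le]; constructor <;> linarith [(Nat.cast_nonneg j : (0 : ℝ) ≤ j)]
  refine (Finset.sum_le_sum hterm).trans_eq ?_
  rw [Finset.sum_const, Finset.card_range, nsmul_eq_mul]
  push_cast; ring

def θCoeff (n : ℕ) : ℂ := exp (π * I * (n + 1 / 2) ^ 2 * ω)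

lemma θTerm_add_θTerm_neg (z : ℂ) (n : ℕ) :
    θTerm z n + θTerm z (-(n + 1)) =
      -(2 * ((-1) ^ n * θCoeff n * sin ((2 * n + 1) * (π * z)))) := by
  set a := (2 * n + 1) * (π * z) with ha
  have h₁ : θTerm z n = θCoeff n * (exp (a * I) * (I * (-1) ^ n)) := by
    have : θTerm z n = exp (π * I * (n + 1 / 2) ^ 2 * ω + a * I +
        (π / 2 * I + n * (π * I))) := by
      rw [θTerm, ha]; push_cast; ring_nf
    rw [this, exp_add, exp_add, exp_add, exp_pi_div_two_mul_I, exp_nat_mul, exp_pi_mul_I, θCoeff]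
    ring
  have h₂ : θTerm z (-(n + 1)) = θCoeff n * (exp (-a * I) * (-I * (-1) ^ n)) := by
    have : θTerm z (-(n + 1)) = exp (π * I * (n + 1 / 2) ^ 2 * ω + -a * I +
        -(π / 2 * I + n * (π * I))) := by
      rw [θTerm, ha]; push_cast; ring_nf
    rw [this, exp_add, exp_add, exp_neg, exp_add, exp_pi_div_two_mul_I, exp_nat_mul,
      exp_pi_mul_I, θCoeff, mul_inv, inv_I, ← inv_pow, inv_neg_one]
    ring
  rw [h₁, h₂, Complex.sin]
  ring

def θQuot (z : ℂ) : ℂ := ∑' n : ℕ, (-1) ^ n * θCoeff n * sinQuot n (π * z)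

lemma θf_eq_two_mul_sin_mul_θQuot (z : ℂ) : θf z = 2 * sin (π * z) * θQuot z := by
  rw [θf_eq_neg_tsum_θTerm, ← tsum_nat_add_neg_add_one (summable_θTerm z), θQuot,
    ← tsum_mul_left, ← tsum_neg]
  refine tsum_congr fun n => ?_
  rw [θTerm_add_θTerm_neg, ← sin_mul_sinQuot]
  ring

lemma exp_neg_pi_mul_sqrt_three_div_two_le : Real.exp (-(π * √3 / 2)) ≤ 1 / 7 := by
  have h₃ : (1.5 : ℝ) ≤ √3 := Real.le_sqrt_of_sq_le (by norm_num)
  have h₂ : Real.exp 2 ≤ Real.exp (π * √3 / 2) :=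
    Real.exp_le_exp.2 (by nlinarith [Real.pi_gt_three])
  have he : Real.exp 2 = Real.exp 1 ^ 2 := by rw [← Real.exp_nat_mul]; norm_num
  rw [Real.exp_neg, inv_le_comm₀ (Real.exp_pos _) (by norm_num)]
  nlinarith [Real.exp_one_gt_d9]

lemma norm_θCoeff (n : ℕ) : ‖θCoeff n‖ = Real.exp (-(π * √3 / 2 * (n + 1 / 2) ^ 2)) := by
  rw [θCoeff, norm_exp,
    show π * I * (n + 1 / 2) ^ 2 * ω = ((π * (n + 1 / 2) ^ 2 : ℝ) : ℂ) * (I * ω) by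
      push_cast; ring,
    re_ofReal_mul, I_mul_re, ω_im]
  ring_nf

lemma norm_θQuot_term_le {z : ℂ} (hz : |z.im| ≤ √3 / 4) (n : ℕ) :
    ‖(-1) ^ n * θCoeff n * sinQuot n (π * z)‖ ≤
      Real.exp (-(π * √3 / 8)) * (3 / 7) ^ n := by
  set r := Real.exp (-(π * √3 / 2))
  have hr : 0 ≤ r := (Real.exp_pos _).le
  have him : |(π * z).im| ≤ π * (√3 / 4) := by
    rw [im_ofReal_mul, abs_mul, abs_of_pos Real.pi_pos]
    exact mul_le_mul_of_nonneg_left hz Real.pi_pos.le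
  have hexp : Real.exp (-(π * √3 / 2 * (n + 1 / 2) ^ 2)) *
      Real.exp (2 * n * (π * (√3 / 4))) = Real.exp (-(π * √3 / 8)) * r ^ (n ^ 2) := by
    rw [← Real.exp_add, ← Real.exp_nat_mul, ← Real.exp_add]
    push_cast; ring_nf
  have hpow : r ^ (n ^ 2) ≤ (1 / 7) ^ n :=
    (pow_le_pow_of_le_one hr (exp_neg_pi_mul_sqrt_three_div_two_le.trans (by norm_num))
      (Nat.le_self_pow two_ne_zero n)).trans (pow_le_pow_left₀ hr
        exp_neg_pi_mul_sqrt_three_div_two_le n)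
  have hlin : (2 * n + 1 : ℝ) ≤ 3 ^ n :=
    calc (2 * n + 1 : ℝ) = 1 + n * 2 := by ring
      _ ≤ (1 + 2) ^ n := one_add_mul_le_pow (by norm_num) n
      _ = 3 ^ n := by norm_num
  calc ‖(-1) ^ n * θCoeff n * sinQuot n (π * z)‖
      ≤ Real.exp (-(π * √3 / 2 * (n + 1 / 2) ^ 2)) *
          ((2 * n + 1) * Real.exp (2 * n * (π * (√3 / 4)))) := by
        rw [norm_mul, norm_mul, norm_pow, norm_neg, norm_one, one_pow, one_mul, norm_θCoeff]
        gcongr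
        exact (norm_sinQuot_le n _).trans (by gcongr)
    _ = (2 * n + 1) * (Real.exp (-(π * √3 / 8)) * r ^ (n ^ 2)) := by
        rw [← hexp]; ring
    _ ≤ 3 ^ n * (Real.exp (-(π * √3 / 8)) * (1 / 7) ^ n) := by gcongr
    _ = Real.exp (-(π * √3 / 8)) * (3 / 7) ^ n := by
        rw [div_eq_mul_one_div 3 7, mul_pow]; ring

lemma norm_θQuot_ge {z : ℂ} (hz : |z.im| ≤ √3 / 4) :
    Real.exp (-(π * √3 / 8)) / 4 ≤ ‖θQuot z‖ := by
  set K := Real.exp (-(π * √3 / 8))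
  set v : ℕ → ℂ := fun n => (-1) ^ n * θCoeff n * sinQuot n (π * z)
  have hgeom : HasSum (fun n : ℕ => K * (3 / 7) ^ n) (K * (1 - 3 / 7)⁻¹) :=
    (hasSum_geometric_of_lt_one (by norm_num) (by norm_num)).mul_left K
  have hsplit : θQuot z = v 0 + ∑' n, v (n + 1) :=
    (hgeom.summable.of_norm_bounded (norm_θQuot_term_le hz)).tsum_eq_zero_add
  have hv₀ : ‖v 0‖ = K := by
    rw [show v 0 = θCoeff 0 by simp [v, sinQuot], norm_θCoeff]
    congr 1; push_cast; ring
  have htail : ‖∑' n, v (n + 1)‖ ≤ K * (3 / 7) * (1 - 3 / 7)⁻¹ := by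
    refine tsum_of_norm_bounded ((hasSum_geometric_of_lt_one (by norm_num) (by norm_num)).mul_left
      (K * (3 / 7))) fun n => (norm_θQuot_term_le hz (n + 1)).trans_eq ?_
    ring
  have hK : 0 < K := Real.exp_pos _
  have := norm_sub_le (θQuot z) (∑' n, v (n + 1))
  rw [hsplit, add_sub_cancel_right, hv₀, ← hsplit] at this
  linarith

lemma θf_eq_zero_iff_of_abs_im_le {z : ℂ} (hz : |z.im| ≤ √3 / 4) :
    θf z = 0 ↔ ∃ m : ℤ, z = m := by
  have hG : θQuot z ≠ 0 :=
    norm_pos_iff.1 ((by positivity : 0 < Real.exp (-(π * √3 / 8)) / 4).trans_le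
      (norm_θQuot_ge hz))
  rw [θf_eq_two_mul_sin_mul_θQuot, mul_eq_zero, or_iff_left hG, mul_eq_zero,
    or_iff_right two_ne_zero, sin_eq_zero_iff]
  refine exists_congr fun k => ?_
  rw [mul_comm (k : ℂ), mul_right_inj' (ofReal_ne_zero.2 Real.pi_ne_zero)]

lemma θf_intCast (m : ℤ) : θf m = 0 :=
  (θf_eq_zero_iff_of_abs_im_le (by rw [intCast_im, abs_zero]; positivity)).2 ⟨m, rfl⟩

lemma deriv_θf_intCast_ne_zero (m : ℤ) : deriv θf m ≠ 0 := by
  have hsin : HasDerivAt (fun z : ℂ => sin (π * z)) (cos (π * m) * π) m := by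
    simpa using ((hasDerivAt_id (m : ℂ)).const_mul (π : ℂ)).csin
  have hsin₀ : sin (π * m) = 0 := sin_eq_zero_iff.2 ⟨m, mul_comm _ _⟩
  have hcos : cos (π * m) ≠ 0 := fun h => by
    simpa [hsin₀, h] using sin_sq_add_cos_sq (π * (m : ℂ))
  have hstrip : ∀ᶠ y in 𝓝 (m : ℂ), |y.im| < √3 / 4 :=
    ((continuous_abs.comp continuous_im).tendsto (m : ℂ)).eventually_lt_const
      (by simp only [Function.comp_apply, intCast_im, abs_zero]; positivity)
  have hle : ∀ᶠ y in 𝓝 (m : ℂ),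
      Real.exp (-(π * √3 / 8)) / 2 * ‖sin (π * y)‖ ≤ ‖θf y‖ :=
    hstrip.mono fun y hy => by
      rw [θf_eq_two_mul_sin_mul_θQuot, norm_mul, norm_mul, Complex.norm_two]
      nlinarith [norm_θQuot_ge hy.le, norm_nonneg (sin (π * y))]
  have := mul_norm_le_norm_of_hasDerivAt (differentiable_θf m).hasDerivAt hsin
    (θf_intCast m) hsin₀ hle
  intro h
  rw [h, norm_zero] at this
  have : 0 < ‖cos (π * m) * π‖ :=
    norm_pos_iff.2 (mul_ne_zero hcos (ofReal_ne_zero.2 Real.pi_ne_zero))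
  nlinarith [Real.exp_pos (-(π * √3 / 8))]

lemma exists_abs_im_sub_intCast_mul_ω_le (z : ℂ) :
    ∃ n : ℤ, |(z - n * ω).im| ≤ √3 / 4 := by
  have hc : 0 < √3 / 2 := by positivity
  refine ⟨round (z.im / (√3 / 2)), ?_⟩
  simp only [sub_im, mul_im, intCast_re, intCast_im, zero_mul, add_zero, ω_im]
  calc |z.im - round (z.im / (√3 / 2)) * (√3 / 2)|
      = √3 / 2 * |z.im / (√3 / 2) - round (z.im / (√3 / 2))| := by
        rw [← abs_of_pos hc, ← abs_mul, abs_of_pos hc]; congr 1; field_simp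
    _ ≤ √3 / 2 * (1 / 2) := by gcongr; exact abs_sub_round _
    _ = √3 / 4 := by ring

lemma θf_add_intCast_mul_ω_eq_zero_iff (z : ℂ) (n : ℤ) :
    θf (z + n * ω) = 0 ↔ θf z = 0 := by
  have h := (periodic_apply_eq_zero (fun _ => neg_ne_zero.2 (exp_ne_zero _)) θf_add_ω).zsmul n z
  simpa only [zsmul_eq_mul] using Iff.of_eq h

lemma θf_eq_zero_iff_mem_Lam (z : ℂ) : θf z = 0 ↔ z ∈ Lam := by
  constructor
  · intro hz
    obtain ⟨n, hn⟩ := exists_abs_im_sub_intCast_mul_ω_le z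
    rw [← sub_add_cancel z (n * ω), θf_add_intCast_mul_ω_eq_zero_iff,
      θf_eq_zero_iff_of_abs_im_le hn] at hz
    obtain ⟨m, hm⟩ := hz
    exact ⟨m, n, by rw [← hm]; ring⟩
  · rintro ⟨m, n, rfl⟩
    rw [θf_add_intCast_mul_ω_eq_zero_iff]
    exact θf_intCast m

lemma deriv_θf_ne_zero_of_mem_Lam {z : ℂ} (hz : z ∈ Lam) : deriv θf z ≠ 0 := by
  obtain ⟨m, n, rfl⟩ := hz
  have hshift := Iff.of_eq ((periodic_apply_eq_zero_and_deriv_eq_zero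
    (fun _ => neg_ne_zero.2 (exp_ne_zero _)) differentiable_θf (by fun_prop) θf_add_ω).zsmul n m)
  rw [zsmul_eq_mul] at hshift
  exact fun h => deriv_θf_intCast_ne_zero m
    (hshift.1 ⟨(θf_eq_zero_iff_mem_Lam _).2 ⟨m, n, rfl⟩, h⟩).2

/-- the zero set of θ is exactly the lattice Λ, and all zeros are simple. -/
theorem stmt9 :
    (∀ z : ℂ, θf z = 0 ↔ z ∈ Lam) ∧ (∀ z ∈ Lam, deriv θf z ≠ 0) :=
  ⟨θf_eq_zero_iff_mem_Lam, fun _ => deriv_θf_ne_zero_of_mem_Lam⟩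
end
end
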